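/- Fix a sequence length n ≥ 1, a number of labels m ≥ 1, a hidden dimension d ≥ 1, and a fixed matrix of hidden vectors H ∈ ℝ^{n×d}. For parameters W ∈ ℝ^{d×m}, A ∈ ℝ^{m×m}, define the CRF score s_{W,A}(y) = ∑_{i=0}^{n−1} (H·W)_{i, y(i)} + ∑_{i=0}^{n−2} A_{y(i), y(i+1)} over label sequences y : Fin n → Fin m, and the CRF label distribution p_{W,A}(y) = exp(s_{W,A}(y)) / ∑_{y'} exp(s_{W,A}(y')), where the sum ranges over all m^n label sequences. Then there exists a constant c ≥ 0, depending only on H, n, m, and d (and not on the parameter matrices), such that for all parameter pairs (W^s, A^s) and (W^t, A^t), the Kullback–Leibler divergence satisfies D_KL(p_{W^s,A^s} ‖ p_{W^t,A^t}) ≤ c · (‖W^s − W^t‖_F² + ‖A^s − A^t‖_F²)^{1/2}. -/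

import Mathlib

/-!
The score `s_{W,A}(y)` is linear in `(W, A)`, so `s_{W,A} - s_{W',A'} = s_{W-W',A-A'}`, and the
entries of `W - W'` and `A - A'` are bounded by the Frobenius distance `ε`. Hence
`|s_{W,A}(y) - s_{W',A'}(y)| ≤ K ε` uniformly in `y`, with `K = ∑ |H i k| + (n - 1)`.
Shifting the logits of a softmax by at most `δ` changes both the numerator and the partition
function by a factor at most `exp δ`, so every ratio `p(y) / q(y)` is at most `exp (2δ)`, and the
KL divergence, a `p`-average of `log (p / q)`, is at most `2δ = 2Kε`.
-/

open Finset Real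

/-- The linear-chain CRF score of a label sequence `y : Fin n → Fin m`, given hidden
vectors `H : ℝ^{n×d}`, emission parameters `W : ℝ^{d×m}` and transition parameters
`A : ℝ^{m×m}`:  `s(y) = ∑_{i<n} (H⬝W)_{i, y i} + ∑_{i<n-1} A_{y i, y (i+1)}`. -/
noncomputable def crfScore {n m d : ℕ} (H : Matrix (Fin n) (Fin d) ℝ)
    (W : Matrix (Fin d) (Fin m) ℝ) (A : Matrix (Fin m) (Fin m) ℝ)
    (y : Fin n → Fin m) : ℝ :=
  (∑ i : Fin n, (H * W) i (y i)) +
    ∑ i : Fin (n - 1), A (y ⟨i, by have := i.isLt; omega⟩) (y ⟨i + 1, by have := i.isLt; omega⟩)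

/-- The CRF label distribution: the softmax of the CRF score over all `m^n` label
sequences. -/
noncomputable def crfProb {n m d : ℕ} (H : Matrix (Fin n) (Fin d) ℝ)
    (W : Matrix (Fin d) (Fin m) ℝ) (A : Matrix (Fin m) (Fin m) ℝ)
    (y : Fin n → Fin m) : ℝ :=
  Real.exp (crfScore H W A y) / ∑ y' : Fin n → Fin m, Real.exp (crfScore H W A y')

noncomputable def softmax {α : Type*} [Fintype α] (s : α → ℝ) (y : α) : ℝ :=
  exp (s y) / ∑ y', exp (s y')

section Softmax

variable {α : Type*} [Fintype α]

theorem sum_softmax [Nonempty α] (s : α → ℝ) : ∑ y, softmax s y = 1 := by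
  unfold softmax
  rw [← sum_div, div_self]
  exact (sum_pos (fun y _ => exp_pos (s y)) univ_nonempty).ne'

theorem sum_exp_le_exp_mul_sum_exp {s t : α → ℝ} {δ : ℝ} (h : ∀ y, t y ≤ s y + δ) :
    ∑ y, exp (t y) ≤ exp δ * ∑ y, exp (s y) := by
  rw [mul_sum]
  gcongr with y
  rw [← exp_add, add_comm]
  exact exp_le_exp.mpr (h y)

theorem softmax_div_softmax_le {s t : α → ℝ} {δ : ℝ} (h : ∀ y, |s y - t y| ≤ δ) (y : α) :
    softmax s y / softmax t y ≤ exp (2 * δ) := by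
  have hZs : 0 < ∑ y', exp (s y') := sum_pos (fun y' _ => exp_pos (s y')) ⟨y, mem_univ y⟩
  have hZ : ∑ y', exp (t y') ≤ exp δ * ∑ y', exp (s y') :=
    sum_exp_le_exp_mul_sum_exp fun y' => by linarith [(abs_le.mp (h y')).1]
  have hexp : exp (s y) ≤ exp δ * exp (t y) := by
    rw [← exp_add]
    exact exp_le_exp.mpr (by linarith [(abs_le.mp (h y)).2])
  calc softmax s y / softmax t y
      = exp (s y) * (∑ y', exp (t y')) / (exp (t y) * ∑ y', exp (s y')) := by
        rw [softmax, softmax, div_div_div_eq, mul_comm (∑ y', exp (s y'))]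
    _ ≤ exp δ * exp (t y) * (exp δ * ∑ y', exp (s y')) / (exp (t y) * ∑ y', exp (s y')) := by
        gcongr
    _ = exp (2 * δ) := by
        rw [two_mul, exp_add]
        field_simp

theorem sum_softmax_mul_log_div_le [Nonempty α] {s t : α → ℝ} {δ : ℝ}
    (h : ∀ y, |s y - t y| ≤ δ) :
    ∑ y, softmax s y * log (softmax s y / softmax t y) ≤ 2 * δ := by
  have hlog : ∀ y, log (softmax s y / softmax t y) ≤ 2 * δ := fun y => by
    have hpos : 0 < softmax s y / softmax t y := by unfold softmax; positivity
    exact (log_le_iff_le_exp hpos).mpr (softmax_div_softmax_le h y)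
  calc ∑ y, softmax s y * log (softmax s y / softmax t y)
      ≤ ∑ y, softmax s y * (2 * δ) := by
        gcongr with y
        · unfold softmax; positivity
        · exact hlog y
    _ = 2 * δ := by rw [← sum_mul, sum_softmax, one_mul]

end Softmax

theorem sq_le_sum_sum_sq {ι κ : Type*} [Fintype ι] [Fintype κ] (M : Matrix ι κ ℝ)
    (i : ι) (j : κ) : M i j ^ 2 ≤ ∑ i, ∑ j, M i j ^ 2 :=
  calc M i j ^ 2 ≤ ∑ j, M i j ^ 2 := single_le_sum (fun j _ => sq_nonneg (M i j)) (mem_univ j)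
    _ ≤ ∑ i, ∑ j, M i j ^ 2 :=
      single_le_sum (fun i _ => sum_nonneg fun j _ => sq_nonneg (M i j)) (mem_univ i)

section CRF

variable {n m d : ℕ}

theorem crfProb_eq_softmax (H : Matrix (Fin n) (Fin d) ℝ) (W : Matrix (Fin d) (Fin m) ℝ)
    (A : Matrix (Fin m) (Fin m) ℝ) : crfProb H W A = softmax (crfScore H W A) :=
  rfl

theorem crfScore_sub (H : Matrix (Fin n) (Fin d) ℝ) (Ws Wt : Matrix (Fin d) (Fin m) ℝ)
    (As At : Matrix (Fin m) (Fin m) ℝ) (y : Fin n → Fin m) :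
    crfScore H Ws As y - crfScore H Wt At y = crfScore H (Ws - Wt) (As - At) y := by
  simp only [crfScore, Matrix.mul_sub, Matrix.sub_apply, sum_sub_distrib]
  ring

theorem abs_crfScore_le (H : Matrix (Fin n) (Fin d) ℝ) {W : Matrix (Fin d) (Fin m) ℝ}
    {A : Matrix (Fin m) (Fin m) ℝ} {ε : ℝ} (hW : ∀ k j, |W k j| ≤ ε) (hA : ∀ i j, |A i j| ≤ ε)
    (y : Fin n → Fin m) :
    |crfScore H W A y| ≤ (∑ i, ∑ k, |H i k| + (n - 1 : ℕ)) * ε := by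
  have hemit : |∑ i, (H * W) i (y i)| ≤ (∑ i, ∑ k, |H i k|) * ε := by
    simp only [Matrix.mul_apply, sum_mul]
    refine (abs_sum_le_sum_abs _ _).trans (sum_le_sum fun i _ => ?_)
    refine (abs_sum_le_sum_abs _ _).trans (sum_le_sum fun k _ => ?_)
    rw [abs_mul]
    exact mul_le_mul_of_nonneg_left (hW k (y i)) (abs_nonneg _)
  have htrans : |∑ i : Fin (n - 1), A (y ⟨i, by omega⟩) (y ⟨i + 1, by omega⟩)| ≤
      ((n - 1 : ℕ) : ℝ) * ε := by
    refine (abs_sum_le_sum_abs _ _).trans ((sum_le_sum fun i _ => hA _ _).trans_eq ?_)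
    rw [sum_const, card_univ, Fintype.card_fin, nsmul_eq_mul]
  rw [crfScore, add_mul]
  exact (abs_add_le _ _).trans (add_le_add hemit htrans)

end CRF

theorem klDiv_crfProb_le_general {n m d : ℕ} (hm : 1 ≤ m)
    (H : Matrix (Fin n) (Fin d) ℝ) :
    ∃ c : ℝ, 0 ≤ c ∧
      ∀ (Ws Wt : Matrix (Fin d) (Fin m) ℝ) (As At : Matrix (Fin m) (Fin m) ℝ),
        ∑ y : Fin n → Fin m,
            crfProb H Ws As y * Real.log (crfProb H Ws As y / crfProb H Wt At y) ≤
          c * Real.sqrt ((∑ i : Fin d, ∑ j : Fin m, (Ws i j - Wt i j) ^ 2) +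
                 ∑ i : Fin m, ∑ j : Fin m, (As i j - At i j) ^ 2) := by
  have : Nonempty (Fin m) := ⟨⟨0, hm⟩⟩
  set K : ℝ := ∑ i, ∑ k, |H i k| + (n - 1 : ℕ)
  refine ⟨2 * K, by positivity, fun Ws Wt As At => ?_⟩
  set Q := (∑ i, ∑ j, (Ws i j - Wt i j) ^ 2) + ∑ i, ∑ j, (As i j - At i j) ^ 2
  have hW : ∀ k j, |(Ws - Wt) k j| ≤ √Q := fun k j =>
    abs_le_sqrt ((sq_le_sum_sum_sq (Ws - Wt) k j).trans (le_add_of_nonneg_right (by positivity)))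
  have hA : ∀ i j, |(As - At) i j| ≤ √Q := fun i j =>
    abs_le_sqrt ((sq_le_sum_sum_sq (As - At) i j).trans (le_add_of_nonneg_left (by positivity)))
  have hscore : ∀ y, |crfScore H Ws As y - crfScore H Wt At y| ≤ K * √Q := fun y => by
    rw [crfScore_sub]
    exact abs_crfScore_le H hW hA y
  rw [crfProb_eq_softmax, crfProb_eq_softmax, mul_assoc]
  exact sum_softmax_mul_log_div_le hscore

/-- There is a constant `c ≥ 0`, depending only on the fixed hidden vectors `H` (and the
dimensions), such that for all parameter pairs, the KL divergence between the two CRF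
label distributions is bounded by `c` times the square root of the sum of squared
Frobenius norms of the parameter differences. -/
theorem klDiv_crfProb_le {n m d : ℕ} (hn : 1 ≤ n) (hm : 1 ≤ m) (hd : 1 ≤ d)
    (H : Matrix (Fin n) (Fin d) ℝ) :
    ∃ c : ℝ, 0 ≤ c ∧
      ∀ (Ws Wt : Matrix (Fin d) (Fin m) ℝ) (As At : Matrix (Fin m) (Fin m) ℝ),
        ∑ y : Fin n → Fin m,
            crfProb H Ws As y * Real.log (crfProb H Ws As y / crfProb H Wt At y) ≤
          c * Real.sqrt ((∑ i : Fin d, ∑ j : Fin m, (Ws i j - Wt i j) ^ 2) +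
                 ∑ i : Fin m, ∑ j : Fin m, (As i j - At i j) ^ 2) :=
  klDiv_crfProb_le_general hm H
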